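/- Consider the Broyden good update B₊ = B + (As − Bs)sᵀ/(sᵀs) for nonzero s ∈ ℝⁿ. If ξ ∈ ℝⁿ satisfies (B − A)ξ = 0 and sᵀξ = 0, then (B₊ − A)ξ = 0. Consequently, if at each step a nonzero sₖ is chosen in the Euclidean orthogonal complement of ker(B_k − A) and B_{k+1} is the Broyden good update of B_k with direction s_k, then ker(B_{k+1} − A) strictly contains ker(B_k − A) whenever B_k ≠ A, and hence B_n = A after at most n steps. -/

import Mathlib

/-!
The correction term of the Broyden update is the rank-one matrix (A − B)s sᵀ/(sᵀs), which
annihilates every vector orthogonal to s; so ker(B − A) survives the update when s ⊥ ker(B − A).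
The secant equation B₊s = As adds s to ker(B₊ − A), and s ∉ ker(B − A) because s ≠ 0 is
orthogonal to that kernel. Hence dim ker(B_k − A) grows by at least one at each step until B_k = A,
which must happen after at most n steps.
-/

open Matrix

section Broyden

variable {ι K : Type*} [Fintype ι] [Field K]

def broydenUpdate (A B : Matrix ι ι K) (s : ι → K) : Matrix ι ι K :=
  B + (s ⬝ᵥ s)⁻¹ • vecMulVec (A *ᵥ s - B *ᵥ s) s

theorem broydenUpdate_sub_mulVec (A B : Matrix ι ι K) (s x : ι → K) :
    (broydenUpdate A B s - A) *ᵥ x = (B - A) *ᵥ x - ((s ⬝ᵥ s)⁻¹ * (s ⬝ᵥ x)) • ((B - A) *ᵥ s) := by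
  rw [broydenUpdate, add_sub_right_comm, add_mulVec, smul_mulVec, vecMulVec_mulVec,
    op_smul_eq_smul, smul_smul, sub_mulVec B A s, ← neg_sub (B *ᵥ s), smul_neg,
    ← sub_eq_add_neg]

theorem broydenUpdate_sub_mulVec_eq_zero {A B : Matrix ι ι K} {s ξ : ι → K}
    (hξ : (B - A) *ᵥ ξ = 0) (hsξ : s ⬝ᵥ ξ = 0) : (broydenUpdate A B s - A) *ᵥ ξ = 0 := by
  rw [broydenUpdate_sub_mulVec, hξ, hsξ, mul_zero, zero_smul, sub_zero]

theorem broydenUpdate_sub_mulVec_self {A B : Matrix ι ι K} {s : ι → K} (hs : s ⬝ᵥ s ≠ 0) :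
    (broydenUpdate A B s - A) *ᵥ s = 0 := by
  rw [broydenUpdate_sub_mulVec, inv_mul_cancel₀ hs, one_smul, sub_self]

theorem ker_le_ker_broydenUpdate {A B : Matrix ι ι K} {s : ι → K}
    (hs : ∀ x ∈ LinearMap.ker (B - A).mulVecLin, s ⬝ᵥ x = 0) :
    LinearMap.ker (B - A).mulVecLin ≤ LinearMap.ker (broydenUpdate A B s - A).mulVecLin :=
  fun x hx => broydenUpdate_sub_mulVec_eq_zero hx (hs x hx)

theorem ker_lt_ker_broydenUpdate {A B : Matrix ι ι K} {s : ι → K} (hss : s ⬝ᵥ s ≠ 0)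
    (hs : ∀ x ∈ LinearMap.ker (B - A).mulVecLin, s ⬝ᵥ x = 0) :
    LinearMap.ker (B - A).mulVecLin < LinearMap.ker (broydenUpdate A B s - A).mulVecLin :=
  SetLike.lt_iff_le_and_exists.mpr ⟨ker_le_ker_broydenUpdate hs, s,
    broydenUpdate_sub_mulVec_self hss, fun h => hss (hs s h)⟩

end Broyden

theorem Submodule.eq_top_of_le_succ_of_lt_succ {K M : Type*} [DivisionRing K] [AddCommGroup M]
    [Module K M] [FiniteDimensional K M] {V : ℕ → Submodule K M} (hle : ∀ k, V k ≤ V (k + 1))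
    (hlt : ∀ k, V k ≠ ⊤ → V k < V (k + 1)) : V (Module.finrank K M) = ⊤ := by
  have top_or_dim_ge : ∀ k, V k = ⊤ ∨ k ≤ Module.finrank K (V k) := by
    intro k
    induction k with
    | zero => exact Or.inr (Nat.zero_le _)
    | succ k ih =>
      by_cases hk : V k = ⊤
      · exact Or.inl (top_le_iff.mp (hk ▸ hle k))
      · have hdim := Submodule.finrank_lt_finrank_of_lt (hlt k hk)
        have hk_le := ih.resolve_left hk
        exact Or.inr (by omega)
  refine (top_or_dim_ge _).elim id fun h => Submodule.eq_top_of_finrank_eq ?_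
  exact (Submodule.finrank_le _).antisymm h

theorem Matrix.eq_zero_of_ker_mulVecLin_eq_top {ι K : Type*} [Fintype ι] [DecidableEq ι]
    [CommSemiring K] {M : Matrix ι ι K}
    (h : LinearMap.ker M.mulVecLin = ⊤) : M = 0 := by
  ext i j
  simpa using congrFun (LinearMap.congr_fun (LinearMap.ker_eq_top.mp h) (Pi.single j 1)) i

/-- Kernel preservation for the Broyden good update, and the resulting quadratic
termination: if each correction direction is chosen nonzero in the Euclidean
orthogonal complement of ker(B_k − A), then the kernels strictly increase while
B_k ≠ A, and B_n = A. -/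
theorem stmt_17 (n : ℕ) (A : Matrix (Fin n) (Fin n) ℝ) :
    (∀ (B : Matrix (Fin n) (Fin n) ℝ) (s ξ : Fin n → ℝ), s ≠ 0 →
      (B - A) *ᵥ ξ = 0 → s ⬝ᵥ ξ = 0 →
      ((B + (s ⬝ᵥ s)⁻¹ • vecMulVec (A *ᵥ s - B *ᵥ s) s) - A) *ᵥ ξ = 0)
    ∧ ∀ (B : ℕ → Matrix (Fin n) (Fin n) ℝ) (s : ℕ → (Fin n → ℝ)),
        (∀ k, s k ≠ 0) →
        (∀ k, ∀ x : Fin n → ℝ, (B k - A) *ᵥ x = 0 → s k ⬝ᵥ x = 0) →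
        (∀ k, B (k + 1) = B k + (s k ⬝ᵥ s k)⁻¹ • vecMulVec (A *ᵥ s k - B k *ᵥ s k) (s k)) →
        (∀ k, B k ≠ A →
          LinearMap.ker (B k - A).mulVecLin < LinearMap.ker (B (k + 1) - A).mulVecLin)
        ∧ B n = A := by
  refine ⟨fun B s ξ _ hξ hsξ => broydenUpdate_sub_mulVec_eq_zero hξ hsξ,
    fun B s hs horth hB => ?_⟩
  change ∀ k, B (k + 1) = broydenUpdate A (B k) (s k) at hB
  have hss : ∀ k, s k ⬝ᵥ s k ≠ 0 := fun k => dotProduct_self_eq_zero.not.mpr (hs k)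
  have hlt : ∀ k, B k ≠ A →
      LinearMap.ker (B k - A).mulVecLin < LinearMap.ker (B (k + 1) - A).mulVecLin :=
    fun k _ => hB k ▸ ker_lt_ker_broydenUpdate (hss k) (horth k)
  refine ⟨hlt, ?_⟩
  have htop := Submodule.eq_top_of_le_succ_of_lt_succ
    (V := fun k => LinearMap.ker (B k - A).mulVecLin)
    (fun k => hB k ▸ ker_le_ker_broydenUpdate (horth k))
    (fun k hk => hlt k fun h => hk (by simp [h]))
  rw [Module.finrank_fin_fun] at htop
  exact sub_eq_zero.mp (eq_zero_of_ker_mulVecLin_eq_top htop)
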